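/- If π is a Poisson bivector field on a manifold M whose rank at each point is at most 2, and k ∈ C^∞(M) is nowhere vanishing, then kπ is also a Poisson bivector field. -/

import Mathlib

open Matrix

/-- Partial derivative in the `i`-th coordinate direction on `ℝⁿ`. -/
noncomputable def pd {n : ℕ} (i : Fin n) (g : (Fin n → ℝ) → ℝ) (p : Fin n → ℝ) : ℝ :=
  fderiv ℝ g p (Pi.single i 1)

/-- The bracket `{g,h} = π(dg,dh)` induced by a bivector field `π`, given by its
antisymmetric matrix of components. -/
noncomputable def bracket {n : ℕ} (π : (Fin n → ℝ) → Matrix (Fin n) (Fin n) ℝ)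
    (g h : (Fin n → ℝ) → ℝ) (p : Fin n → ℝ) : ℝ :=
  ∑ i, ∑ j, π p i j * pd i g p * pd j h p

/-! ### Linear algebra: Pfaffian-type identity for skew matrices of rank ≤ 2 -/

lemma det_fin_four' (B : Matrix (Fin 4) (Fin 4) ℝ) :
    B.det =
      B 0 0 * (B 1 1 * (B 2 2 * B 3 3 - B 2 3 * B 3 2) - B 1 2 * (B 2 1 * B 3 3 - B 2 3 * B 3 1)
        + B 1 3 * (B 2 1 * B 3 2 - B 2 2 * B 3 1))
      - B 0 1 * (B 1 0 * (B 2 2 * B 3 3 - B 2 3 * B 3 2) - B 1 2 * (B 2 0 * B 3 3 - B 2 3 * B 3 0)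
        + B 1 3 * (B 2 0 * B 3 2 - B 2 2 * B 3 0))
      + B 0 2 * (B 1 0 * (B 2 1 * B 3 3 - B 2 3 * B 3 1) - B 1 1 * (B 2 0 * B 3 3 - B 2 3 * B 3 0)
        + B 1 3 * (B 2 0 * B 3 1 - B 2 1 * B 3 0))
      - B 0 3 * (B 1 0 * (B 2 1 * B 3 2 - B 2 2 * B 3 1) - B 1 1 * (B 2 0 * B 3 2 - B 2 2 * B 3 0)
        + B 1 2 * (B 2 0 * B 3 1 - B 2 1 * B 3 0)) := by
  rw [show B = !![B 0 0, B 0 1, B 0 2, B 0 3; B 1 0, B 1 1, B 1 2, B 1 3;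
      B 2 0, B 2 1, B 2 2, B 2 3; B 3 0, B 3 1, B 3 2, B 3 3] from by
    ext i j; fin_cases i <;> fin_cases j <;> rfl]
  simp [Matrix.det_succ_row_zero, Fin.sum_univ_succ,
    show Fin.succAbove (1 : Fin 4) (2 : Fin 3) = 3 by decide,
    show Fin.succAbove (2 : Fin 4) (2 : Fin 3) = 3 by decide,
    show Fin.succAbove (3 : Fin 4) (2 : Fin 3) = 2 by decide,
    show Fin.castSucc (2 : Fin 3) = (2 : Fin 4) by decide]
  ring

lemma det4_skew (B : Matrix (Fin 4) (Fin 4) ℝ) (hB : Bᵀ = -B) :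
    B.det = (B 0 1 * B 2 3 - B 0 2 * B 1 3 + B 0 3 * B 1 2) ^ 2 := by
  have h : ∀ s t : Fin 4, B t s = -B s t := fun s t => by
    have := congrFun (congrFun hB s) t
    simpa [Matrix.transpose_apply] using this
  have d : ∀ s : Fin 4, B s s = 0 := fun s => by have := h s s; linarith
  rw [det_fin_four', h 0 1, h 0 2, h 0 3, h 1 2, h 1 3, h 2 3, d 0, d 1, d 2, d 3]
  ring

lemma pf_zero {n : ℕ} (A : Matrix (Fin n) (Fin n) ℝ) (hA : Aᵀ = -A) (hr : A.rank ≤ 2)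
    (i j k l : Fin n) : A i j * A k l - A i k * A j l + A i l * A j k = 0 := by
  by_contra hne
  set f : Fin 4 → Fin n := ![i, j, k, l] with hf
  set M : Matrix (Fin 4) (Fin 4) ℝ := A.submatrix f f with hM
  have hMskew : Mᵀ = -M := by
    ext s t
    have := congrFun (congrFun hA (f s)) (f t)
    simpa [hM, Matrix.transpose_apply, Matrix.submatrix_apply] using this
  have hMdet : M.det = (A i j * A k l - A i k * A j l + A i l * A j k) ^ 2 := by
    rw [det4_skew M hMskew]; congr 1
  have hdet : M.det ≠ 0 := by rw [hMdet]; exact pow_ne_zero 2 hne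
  have hU : IsUnit M := (Matrix.isUnit_iff_isUnit_det M).2 (isUnit_iff_ne_zero.2 hdet)
  have hrows : LinearIndependent ℝ (fun s => M s) := Matrix.linearIndependent_rows_iff_isUnit.2 hU
  have hv : LinearIndependent ℝ (fun s => A (f s)) := by
    apply LinearIndependent.of_comp (LinearMap.funLeft ℝ ℝ f)
    exact hrows
  have hcard : Fintype.card (Fin 4) = Set.finrank ℝ (Set.range fun s => A (f s)) :=
    linearIndependent_iff_card_eq_finrank_span.mp hv
  have hsub : Submodule.span ℝ (Set.range fun s => A (f s)) ≤
      Submodule.span ℝ (Set.range fun i => A i) := by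
    apply Submodule.span_mono
    rintro x ⟨s, rfl⟩
    exact ⟨f s, rfl⟩
  have hle : Set.finrank ℝ (Set.range fun s => A (f s)) ≤ A.rank := by
    rw [Matrix.rank_eq_finrank_span_row]
    exact Submodule.finrank_mono hsub
  simp [Set.finrank] at hcard hle
  omega

/-- Reindexing equivalence used for the second cyclic term. -/
def quadE2 {n : ℕ} : ((Fin n × Fin n) × (Fin n × Fin n)) ≃ ((Fin n × Fin n) × (Fin n × Fin n)) where
  toFun r := ((r.2.1, r.1.2), (r.2.2, r.1.1))
  invFun s := ((s.2.2, s.1.2), (s.1.1, s.2.1))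
  left_inv _ := rfl
  right_inv _ := rfl

/-- Reindexing equivalence used for the third cyclic term. -/
def quadE3 {n : ℕ} : ((Fin n × Fin n) × (Fin n × Fin n)) ≃ ((Fin n × Fin n) × (Fin n × Fin n)) where
  toFun r := ((r.2.2, r.1.2), (r.1.1, r.2.1))
  invFun s := ((s.2.1, s.1.2), (s.2.2, s.1.1))
  left_inv _ := rfl
  right_inv _ := rfl

/-- The summand of the product of two brackets, flattened over a quadruple index. -/
def quadF {n : ℕ} (A : Matrix (Fin n) (Fin n) ℝ) (x y z w : Fin n → ℝ)
    (r : (Fin n × Fin n) × (Fin n × Fin n)) : ℝ :=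
  A r.1.1 r.1.2 * x r.1.1 * w r.1.2 * (A r.2.1 r.2.2 * y r.2.1 * z r.2.2)

lemma quad_prodsum {n : ℕ} (A : Matrix (Fin n) (Fin n) ℝ) (x y z w : Fin n → ℝ) :
    (∑ i, ∑ j, A i j * x i * w j) * (∑ i, ∑ j, A i j * y i * z j)
      = ∑ r : (Fin n × Fin n) × (Fin n × Fin n), quadF A x y z w r := by
  rw [show (∑ i, ∑ j, A i j * x i * w j) = ∑ p : Fin n × Fin n, A p.1 p.2 * x p.1 * w p.2 from
      (Fintype.sum_prod_type (f := fun p : Fin n × Fin n => A p.1 p.2 * x p.1 * w p.2)).symm,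
    show (∑ i, ∑ j, A i j * y i * z j) = ∑ p : Fin n × Fin n, A p.1 p.2 * y p.1 * z p.2 from
      (Fintype.sum_prod_type (f := fun p : Fin n × Fin n => A p.1 p.2 * y p.1 * z p.2)).symm,
    Finset.sum_mul_sum]
  exact (Fintype.sum_prod_type (f := quadF A x y z w)).symm

lemma quad {n : ℕ} (A : Matrix (Fin n) (Fin n) ℝ) (hA : Aᵀ = -A) (hr : A.rank ≤ 2)
    (a b c d : Fin n → ℝ) :
    (∑ i, ∑ j, A i j * a i * d j) * (∑ i, ∑ j, A i j * b i * c j)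
      + (∑ i, ∑ j, A i j * b i * d j) * (∑ i, ∑ j, A i j * c i * a j)
      + (∑ i, ∑ j, A i j * c i * d j) * (∑ i, ∑ j, A i j * a i * b j) = 0 := by
  have skew : ∀ s t, A t s = -A s t := fun s t => by
    have := congrFun (congrFun hA s) t
    simpa [Matrix.transpose_apply] using this
  rw [quad_prodsum, quad_prodsum, quad_prodsum]
  rw [show (∑ r, quadF A b c a d r) = ∑ r, quadF A b c a d (quadE2 r) from
      (Fintype.sum_equiv quadE2 (fun r => quadF A b c a d (quadE2 r)) _ (fun r => rfl)).symm,
    show (∑ r, quadF A c a b d r) = ∑ r, quadF A c a b d (quadE3 r) from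
      (Fintype.sum_equiv quadE3 (fun r => quadF A c a b d (quadE3 r)) _ (fun r => rfl)).symm,
    ← Finset.sum_add_distrib, ← Finset.sum_add_distrib]
  refine Finset.sum_eq_zero ?_
  rintro ⟨⟨i, l⟩, ⟨j, k⟩⟩ -
  have hpf := pf_zero A hA hr i j k l
  simp only [quadF, quadE2, quadE3, Equiv.coe_fn_mk]
  linear_combination (a i * b j * c k * d l) * hpf
    + (A j l * a i * b j * c k * d l) * skew i k

/-! ### Analysis lemmas -/

lemma pd_contDiff {n : ℕ} {g : (Fin n → ℝ) → ℝ} (hg : ContDiff ℝ (⊤ : ℕ∞) g) (i : Fin n) :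
    ContDiff ℝ (⊤ : ℕ∞) (pd i g) :=
  (hg.fderiv_right (by simp)).clm_apply contDiff_const

lemma pd_mul {n : ℕ} {u v : (Fin n → ℝ) → ℝ} {p : Fin n → ℝ} (i : Fin n)
    (hu : DifferentiableAt ℝ u p) (hv : DifferentiableAt ℝ v p) :
    pd i (fun q => u q * v q) p = pd i u p * v p + u p * pd i v p := by
  unfold pd
  rw [fderiv_fun_mul hu hv]
  simp [smul_eq_mul]
  ring

lemma bracket_contDiff {n : ℕ} {π : (Fin n → ℝ) → Matrix (Fin n) (Fin n) ℝ}
    (hsmooth : ∀ i j, ContDiff ℝ (⊤ : ℕ∞) (fun p => π p i j))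
    {g h : (Fin n → ℝ) → ℝ} (hg : ContDiff ℝ (⊤ : ℕ∞) g) (hh : ContDiff ℝ (⊤ : ℕ∞) h) :
    ContDiff ℝ (⊤ : ℕ∞) (bracket π g h) := by
  unfold bracket
  refine ContDiff.sum fun i _ => ContDiff.sum fun j _ => ?_
  exact ((hsmooth i j).mul (pd_contDiff hg i)).mul (pd_contDiff hh j)

lemma bracket_mul_right {n : ℕ} (π : (Fin n → ℝ) → Matrix (Fin n) (Fin n) ℝ)
    (g u v : (Fin n → ℝ) → ℝ) (p : Fin n → ℝ)
    (hu : DifferentiableAt ℝ u p) (hv : DifferentiableAt ℝ v p) :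
    bracket π g (fun q => u q * v q) p
      = bracket π g u p * v p + u p * bracket π g v p := by
  unfold bracket
  rw [Finset.sum_mul, Finset.mul_sum, ← Finset.sum_add_distrib]
  refine Finset.sum_congr rfl fun i _ => ?_
  rw [Finset.sum_mul, Finset.mul_sum, ← Finset.sum_add_distrib]
  refine Finset.sum_congr rfl fun j _ => ?_
  rw [pd_mul j hu hv]
  ring

lemma bracket_smul {n : ℕ} (π : (Fin n → ℝ) → Matrix (Fin n) (Fin n) ℝ)
    (k g h : (Fin n → ℝ) → ℝ) (p : Fin n → ℝ) :
    bracket (fun q => k q • π q) g h p = k p * bracket π g h p := by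
  unfold bracket
  rw [Finset.mul_sum]
  refine Finset.sum_congr rfl fun i _ => ?_
  rw [Finset.mul_sum]
  refine Finset.sum_congr rfl fun j _ => ?_
  simp [Matrix.smul_apply, smul_eq_mul]
  ring

/-- If `π` is a Poisson bivector field of rank at most 2 at each point and `k` is a
nowhere-vanishing smooth function, then `kπ` is again a Poisson bivector field. -/
theorem smul_of_rank_le_two_poisson_is_poisson {n : ℕ}
    (π : (Fin n → ℝ) → Matrix (Fin n) (Fin n) ℝ)
    (hsmooth : ∀ i j, ContDiff ℝ (⊤ : ℕ∞) (fun p => π p i j))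
    (hanti : ∀ p, (π p).transpose = -π p)
    (hπ : ∀ g h f : (Fin n → ℝ) → ℝ, ContDiff ℝ (⊤ : ℕ∞) g → ContDiff ℝ (⊤ : ℕ∞) h → ContDiff ℝ (⊤ : ℕ∞) f →
      ∀ p, bracket π g (bracket π h f) p + bracket π h (bracket π f g) p
        + bracket π f (bracket π g h) p = 0)
    (hrank : ∀ p, (π p).rank ≤ 2)
    (k : (Fin n → ℝ) → ℝ) (hk : ContDiff ℝ (⊤ : ℕ∞) k) (hk0 : ∀ p, k p ≠ 0) :
    ∀ g h f : (Fin n → ℝ) → ℝ, ContDiff ℝ (⊤ : ℕ∞) g → ContDiff ℝ (⊤ : ℕ∞) h → ContDiff ℝ (⊤ : ℕ∞) f →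
    ∀ p : Fin n → ℝ,
      bracket (fun q => k q • π q) g (bracket (fun q => k q • π q) h f) p
        + bracket (fun q => k q • π q) h (bracket (fun q => k q • π q) f g) p
        + bracket (fun q => k q • π q) f (bracket (fun q => k q • π q) g h) p = 0 := by
  intro g h f hg hh hf p
  have hkd : DifferentiableAt ℝ k p := (hk.differentiable (by simp)).differentiableAt
  have hBhf : ContDiff ℝ (⊤ : ℕ∞) (bracket π h f) := bracket_contDiff hsmooth hh hf
  have hBfg : ContDiff ℝ (⊤ : ℕ∞) (bracket π f g) := bracket_contDiff hsmooth hf hg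
  have hBgh : ContDiff ℝ (⊤ : ℕ∞) (bracket π g h) := bracket_contDiff hsmooth hg hh
  rw [bracket_smul, bracket_smul, bracket_smul,
    show bracket (fun q => k q • π q) h f = fun q => k q * bracket π h f q from
      funext fun q => bracket_smul π k h f q,
    show bracket (fun q => k q • π q) f g = fun q => k q * bracket π f g q from
      funext fun q => bracket_smul π k f g q,
    show bracket (fun q => k q • π q) g h = fun q => k q * bracket π g h q from
      funext fun q => bracket_smul π k g h q,
    bracket_mul_right π g k (bracket π h f) p hkd
      ((hBhf.differentiable (by simp)).differentiableAt),
    bracket_mul_right π h k (bracket π f g) p hkd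
      ((hBfg.differentiable (by simp)).differentiableAt),
    bracket_mul_right π f k (bracket π g h) p hkd
      ((hBgh.differentiable (by simp)).differentiableAt)]
  have jac := hπ g h f hg hh hf p
  have S : bracket π g k p * bracket π h f p + bracket π h k p * bracket π f g p
      + bracket π f k p * bracket π g h p = 0 :=
    quad (π p) (hanti p) (hrank p) (fun i => pd i g p) (fun i => pd i h p)
      (fun i => pd i f p) (fun i => pd i k p)
  linear_combination k p * S + k p * k p * jac
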